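/- arXiv:1408.3498 — 4 statements merged into one kernel-verified Lean document; each statement's English description precedes it below -/
import Mathlib

section
/- For any d ∈ ℕ with d ≥ 2 and any m ∈ ℕ₀, the sum over all k ∈ ℕ₀^d with |k|₁ ≤ m of 2^(|k|₁) satisfies ((m+d−1)/(d−1))^(d−1) · 2^m ≤ Σ_{|k|₁ ≤ m} 2^(|k|₁) ≤ (e(m+d−1)/(d−1))^(d−1) · 2^(m+1). -/
/-!
Grouping the multi-indices by `j = |k|₁` turns the sum into `∑_{j ≤ m} C(j+d-1, d-1) 2^j`.
The top term `j = m` alone gives the lower bound after `(N/n)^n ≤ C(N,n)`; for the upper bound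
every binomial coefficient is at most the top one, `∑_{j ≤ m} 2^j < 2^(m+1)`, and
`C(N,n) ≤ N^n/n! ≤ (eN/n)^n` since `n^n/n! ≤ e^n`.
-/

open Finset Nat

theorem Nat.pow_le_choose_mul_pow {n N : ℕ} (h : n ≤ N) : N ^ n ≤ N.choose n * n ^ n := by
  refine Nat.le_of_mul_le_mul_right ?_ n.factorial_pos
  calc N ^ n * n ! = ∏ i ∈ range n, N * (n - i) := by
        rw [prod_mul_distrib, prod_const, card_range, ← descFactorial_eq_prod_range,
          descFactorial_self]
    _ ≤ ∏ i ∈ range n, (N - i) * n := by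
        refine prod_le_prod' fun i _ => ?_
        rw [Nat.mul_sub, Nat.sub_mul]
        exact Nat.sub_le_sub_left ((Nat.mul_le_mul_left i h).trans_eq (mul_comm i N)) _
    _ = N.choose n * n ^ n * n ! := by
        rw [prod_mul_distrib, prod_const, card_range, ← descFactorial_eq_prod_range,
          descFactorial_eq_factorial_mul_choose]
        ring

theorem Nat.div_pow_le_choose {α : Type*} [Field α] [LinearOrder α] [IsStrictOrderedRing α]
    {n N : ℕ} (h : n ≤ N) : ((N : α) / n) ^ n ≤ N.choose n := by
  rw [div_pow, div_le_iff₀ (by exact_mod_cast Nat.pow_self_pos)]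
  exact_mod_cast Nat.pow_le_choose_mul_pow h

theorem Nat.choose_le_exp_one_mul_div_pow (n N : ℕ) :
    (N.choose n : ℝ) ≤ (Real.exp 1 * N / n) ^ n := by
  have hn : (0 : ℝ) < (n : ℝ) ^ n := by exact_mod_cast Nat.pow_self_pos
  calc (N.choose n : ℝ) ≤ (N : ℝ) ^ n / n ! := Nat.choose_le_pow_div n N
    _ ≤ (N : ℝ) ^ n * (Real.exp n / n ^ n) := by
      rw [div_eq_mul_inv]
      gcongr
      rw [le_div_iff₀ hn, inv_mul_eq_div]
      exact Real.pow_div_factorial_le_exp _ n.cast_nonneg n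
    _ = (Real.exp 1 * N / n) ^ n := by
      rw [div_pow, mul_pow, ← Real.exp_one_pow]; ring

theorem Finset.card_piAntidiag_univ {ι : Type*} [Fintype ι] [DecidableEq ι] (j : ℕ) :
    #(piAntidiag (univ : Finset ι) j) = (Fintype.card ι + j - 1).choose j := by
  rw [← map_sym_eq_piAntidiag, card_map, sym_univ, Finset.card_univ, Sym.card_sym_eq_choose]

theorem tsum_ite_sum_le_eq_sum_range {ι M : Type*} [Fintype ι] [AddCommMonoid M]
    [TopologicalSpace M] (f : ℕ → M) (m : ℕ) :
    ∑' k : ι → ℕ, (if ∑ i, k i ≤ m then f (∑ i, k i) else 0)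
      = ∑ j ∈ range (m + 1), (Fintype.card ι + j - 1).choose j • f j := by
  classical
  have hsupp : ∀ k : ι → ℕ, k ∉ (range (m + 1)).biUnion (piAntidiag univ) →
      (if ∑ i, k i ≤ m then f (∑ i, k i) else 0) = 0 := by
    intro k hk
    rw [if_neg]
    simpa [Nat.lt_succ_iff] using hk
  rw [tsum_eq_sum hsupp, sum_biUnion]
  · refine sum_congr rfl fun j hj => ?_
    rw [sum_congr rfl fun k hk => ?_, sum_const, Finset.card_piAntidiag_univ]
    rw [(mem_piAntidiag.1 hk).1, if_pos (Nat.lt_succ_iff.1 (mem_range.1 hj))]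
  · exact fun a _ b _ hab => disjoint_left.2 fun k hka hkb =>
      hab ((mem_piAntidiag.1 hka).1.symm.trans (mem_piAntidiag.1 hkb).1)

theorem Nat.sum_range_choose_mul_two_pow_le (n m : ℕ) :
    ∑ j ∈ range (m + 1), (n + j).choose n * 2 ^ j ≤ (n + m).choose n * 2 ^ (m + 1) :=
  calc ∑ j ∈ range (m + 1), (n + j).choose n * 2 ^ j
      ≤ ∑ j ∈ range (m + 1), (n + m).choose n * 2 ^ j :=
        sum_le_sum fun j hj => Nat.mul_le_mul_right _ <|
          choose_le_choose n <| Nat.add_le_add_left (Nat.lt_succ_iff.1 (mem_range.1 hj)) n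
    _ ≤ (n + m).choose n * 2 ^ (m + 1) := by
        rw [← mul_sum]
        exact Nat.mul_le_mul_left _ (Nat.geomSum_lt le_rfl fun j hj => mem_range.1 hj).le

/-- two-sided bound for `∑_{|k|₁ ≤ m} 2^{|k|₁}`. -/
theorem stmt2 (d : ℕ) (hd : 2 ≤ d) (m : ℕ) :
    (((m : ℝ) + d - 1) / ((d : ℝ) - 1)) ^ (d - 1) * 2 ^ m
        ≤ (∑' k : Fin d → ℕ, if (∑ i, k i) ≤ m then (2:ℝ) ^ (∑ i, k i) else 0) ∧
      (∑' k : Fin d → ℕ, if (∑ i, k i) ≤ m then (2:ℝ) ^ (∑ i, k i) else 0)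
        ≤ (Real.exp 1 * ((m : ℝ) + d - 1) / ((d : ℝ) - 1)) ^ (d - 1) * 2 ^ (m + 1) := by
  obtain ⟨n, rfl⟩ : ∃ n, d = n + 1 := ⟨d - 1, by omega⟩
  have hsum : (∑' k : Fin (n + 1) → ℕ, if ∑ i, k i ≤ m then (2 : ℝ) ^ (∑ i, k i) else 0)
      = ((∑ j ∈ range (m + 1), (n + j).choose n * 2 ^ j : ℕ) : ℝ) := by
    rw [tsum_ite_sum_le_eq_sum_range (fun j => (2 : ℝ) ^ j), Nat.cast_sum]
    refine sum_congr rfl fun j _ => ?_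
    rw [Fintype.card_fin, show n + 1 + j - 1 = n + j by omega, ← Nat.choose_symm_add]
    simp [nsmul_eq_mul]
  have hN : (m : ℝ) + (n + 1 : ℕ) - 1 = (n + m : ℕ) := by push_cast; ring
  have hn : ((n + 1 : ℕ) : ℝ) - 1 = n := by push_cast; ring
  rw [hsum, hN, hn, Nat.add_sub_cancel]
  constructor
  · calc (((n + m : ℕ) : ℝ) / n) ^ n * 2 ^ m ≤ ((n + m).choose n : ℝ) * 2 ^ m := by
          gcongr; exact Nat.div_pow_le_choose (Nat.le_add_right n m)
      _ ≤ _ := by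
          exact_mod_cast single_le_sum (f := fun j => (n + j).choose n * 2 ^ j)
            (fun _ _ => Nat.zero_le _) (self_mem_range_succ m)
  · calc _ ≤ ((n + m).choose n : ℝ) * 2 ^ (m + 1) := by
          exact_mod_cast Nat.sum_range_choose_mul_two_pow_le n m
      _ ≤ _ := by
          gcongr; exact Nat.choose_le_exp_one_mul_div_pow n (n + m)
end

section
/- Let α > 0, γ ≥ 0, β < γ, ε with 0 < ε < γ − β < α. Then there is a constant C = C(α, β, γ, ε, d) > 0 such that for all ξ > 0, the sum over all k ∈ ℕ₀^d with (α−ε)|k|₁ − (γ−β−ε)|k|_∞ > ξ of 2^(−2α|k|₁ + 2(γ−β)|k|_∞) is at most C · 2^(−2ξ). -/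
/-!
Write `n = |k|₁`, `m = |k|_∞`, `a = α - ε`, `b = γ - β - ε`. The exponent equals
`-2 (a n - b m) - 2 ε (n - m)`, so on the tail `a n - b m > ξ` the summand is
`2^{-2ξ} · 2^{-2 (a n - b m - ξ)} · 2^{-2 ε (n - m)}`. Bound it by the sum over the coordinates `i`
of the same expression with `m` replaced by `k i`. If `r` is the sum of the other coordinates,
then `a n - b k i = (α - (γ - β)) k i + a r`, so as `k i` runs through the tail the middle factor
is dominated by a geometric series with ratio `2^{-2(α - (γ - β))}` starting from `1`, while the
last factor `2^{-2 ε r}` sums over the other coordinates to a power of a geometric series.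
-/

open Finset
open scoped ENNReal

theorem ENNReal.tsum_fin_pi_prod {α : Type*} :
    ∀ {n : ℕ} (f : Fin n → α → ℝ≥0∞), ∑' q : Fin n → α, ∏ i, f i (q i) = ∏ i, ∑' a, f i a
  | 0, f => by simp
  | n + 1, f => by
    rw [← (Fin.consEquiv fun _ => α).tsum_eq, ENNReal.tsum_prod', Fin.prod_univ_succ,
      ← ENNReal.tsum_fin_pi_prod (fun i => f i.succ), ← ENNReal.tsum_mul_right]
    simp [Fin.consEquiv, Fin.prod_univ_succ, ENNReal.tsum_mul_left]

theorem ENNReal.tsum_pi_prod {ι α : Type*} [Fintype ι] (f : ι → α → ℝ≥0∞) :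
    ∑' q : ι → α, ∏ i, f i (q i) = ∏ i, ∑' a, f i a := by
  let e := Fintype.equivFin ι
  rw [← (Equiv.piCongrLeft' (fun _ => α) e).symm.tsum_eq,
    Fintype.prod_equiv e _ (fun j => ∑' a, f (e.symm j) a) (by simp),
    ← ENNReal.tsum_fin_pi_prod]
  refine tsum_congr fun q => Fintype.prod_equiv e _ _ fun i => ?_
  simp

theorem ENNReal.tsum_pi_pow_sum {ι : Type*} [Fintype ι] (ρ : ℝ≥0∞) :
    ∑' q : ι → ℕ, ρ ^ (∑ i, q i) = (∑' m : ℕ, ρ ^ m) ^ Fintype.card ι := by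
  simp_rw [← prod_pow_eq_pow_sum, ENNReal.tsum_pi_prod (fun _ m => ρ ^ m), prod_const, card_univ]

theorem ENNReal.tsum_two_rpow_geometric_lt_top {x : ℝ} (hx : 0 < x) :
    ∑' j : ℕ, ((2 : ℝ≥0∞) ^ (-(2 * x))) ^ j < ∞ :=
  tsum_geometric_lt_top.mpr (ENNReal.rpow_lt_one_of_one_lt_of_neg one_lt_two (by linarith))

theorem ENNReal.tsum_ite_two_rpow_le {c : ℝ} (hc : 0 < c) (t : ℝ) :
    ∑' m : ℕ, (if t < c * m then (2 : ℝ≥0∞) ^ (-(2 * (c * m - t))) else 0)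
      ≤ ∑' j : ℕ, ((2 : ℝ≥0∞) ^ (-(2 * c))) ^ j := by
  set m₀ := ⌈t / c⌉₊
  have hm₀ : t ≤ c * m₀ := (div_le_iff₀' hc).mp (Nat.le_ceil _)
  have below : ∀ m ∈ range m₀, ¬ t < c * m := fun m hm =>
    not_lt.mpr ((lt_div_iff₀' hc).mp (Nat.lt_ceil.mp (mem_range.mp hm))).le
  rw [← ENNReal.summable.sum_add_tsum_nat_add' (k := m₀),
    sum_eq_zero fun m hm => if_neg (below m hm), zero_add]
  refine ENNReal.tsum_le_tsum fun j => ?_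
  split_ifs
  · rw [← ENNReal.rpow_natCast, ← ENNReal.rpow_mul]
    exact ENNReal.rpow_le_rpow_of_exponent_le one_le_two (by push_cast; nlinarith)
  · exact zero_le

theorem ENNReal.tsum_le_toReal_of_tsum_ofReal_le {ι : Type*} {f : ι → ℝ} (hf : ∀ x, 0 ≤ f x)
    {B : ℝ≥0∞} (hB : B ≠ ∞) (h : ∑' x, ENNReal.ofReal (f x) ≤ B) : ∑' x, f x ≤ B.toReal :=
  calc ∑' x, f x = ∑' x, (ENNReal.ofReal (f x)).toReal := by simp [ENNReal.toReal_ofReal, hf]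
    _ = (∑' x, ENNReal.ofReal (f x)).toReal := (ENNReal.tsum_toReal_eq fun _ => by simp).symm
    _ ≤ B.toReal := ENNReal.toReal_mono hB h

/-- The summand of the theorem as a function of `n = |k|₁` and `m = |k|_∞`, with `δ = γ - β`;
it is valued in `ℝ≥0∞` so that no series needs a summability side condition. -/
noncomputable def energyTailTerm (α δ ε ξ : ℝ) (n m : ℕ) : ℝ≥0∞ :=
  if ξ < (α - ε) * n - (δ - ε) * m then 2 ^ (-(2 * α) * n + 2 * δ * m) else 0

section energyTailTerm

variable {α δ ε ξ : ℝ} {ι : Type*} [Fintype ι]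

theorem ofReal_ite_eq_energyTailTerm (n m : ℕ) :
    ENNReal.ofReal
        (if ξ < (α - ε) * n - (δ - ε) * m then (2 : ℝ) ^ (-(2 * α) * n + 2 * δ * m) else 0)
      = energyTailTerm α δ ε ξ n m := by
  rw [energyTailTerm, apply_ite ENNReal.ofReal, ENNReal.ofReal_zero,
    ← ENNReal.ofReal_rpow_of_pos two_pos, ENNReal.ofReal_ofNat]

theorem energyTailTerm_add_left (m r : ℕ) :
    energyTailTerm α δ ε ξ (m + r) m = 2 ^ (-(2 * ξ)) * (2 ^ (-(2 * ε))) ^ r *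
      if ξ - (α - ε) * r < (α - δ) * m
      then (2 : ℝ≥0∞) ^ (-(2 * ((α - δ) * m - (ξ - (α - ε) * r)))) else 0 := by
  have hcond : ξ < (α - ε) * ↑(m + r) - (δ - ε) * m ↔ ξ - (α - ε) * r < (α - δ) * m := by
    push_cast
    constructor <;> intro h <;> linarith
  rw [energyTailTerm, if_congr hcond rfl rfl, mul_ite, mul_zero, ← ENNReal.rpow_natCast,
    ← ENNReal.rpow_mul, ← ENNReal.rpow_add _ _ two_ne_zero ENNReal.ofNat_ne_top,
    ← ENNReal.rpow_add _ _ two_ne_zero ENNReal.ofNat_ne_top]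
  congr 2
  push_cast
  ring

theorem tsum_energyTailTerm_add_left_le (hδα : δ < α) (r : ℕ) :
    ∑' m : ℕ, energyTailTerm α δ ε ξ (m + r) m
      ≤ 2 ^ (-(2 * ξ)) * (2 ^ (-(2 * ε))) ^ r
        * ∑' j : ℕ, ((2 : ℝ≥0∞) ^ (-(2 * (α - δ)))) ^ j := by
  simp_rw [energyTailTerm_add_left, ENNReal.tsum_mul_left]
  exact mul_le_mul_right (ENNReal.tsum_ite_two_rpow_le (sub_pos.mpr hδα) _) _

theorem tsum_energyTailTerm_coord_le [DecidableEq ι] (hδα : δ < α) (i : ι) :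
    ∑' k : ι → ℕ, energyTailTerm α δ ε ξ (∑ j, k j) (k i)
      ≤ 2 ^ (-(2 * ξ)) * (∑' j : ℕ, ((2 : ℝ≥0∞) ^ (-(2 * (α - δ)))) ^ j)
        * (∑' m : ℕ, ((2 : ℝ≥0∞) ^ (-(2 * ε))) ^ m) ^ Fintype.card ι := by
  set G := ∑' j : ℕ, ((2 : ℝ≥0∞) ^ (-(2 * (α - δ)))) ^ j
  set S := ∑' m : ℕ, ((2 : ℝ≥0∞) ^ (-(2 * ε))) ^ m
  have hne (j : {j // j ≠ i}) : (j : ι) ≠ i := j.2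
  calc ∑' k : ι → ℕ, energyTailTerm α δ ε ξ (∑ j, k j) (k i)
      = ∑' q : {j // j ≠ i} → ℕ, ∑' m : ℕ, energyTailTerm α δ ε ξ (m + ∑ j, q j) m := by
        rw [← (Equiv.funSplitAt i ℕ).symm.tsum_eq, ENNReal.tsum_prod', ENNReal.tsum_comm]
        simp [Fintype.sum_eq_add_sum_subtype_ne _ i, hne]
    _ ≤ ∑' q : {j // j ≠ i} → ℕ, 2 ^ (-(2 * ξ)) * G * (2 ^ (-(2 * ε))) ^ (∑ j, q j) := by
        refine ENNReal.tsum_le_tsum fun q => ?_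
        rw [mul_right_comm]
        exact tsum_energyTailTerm_add_left_le hδα _
    _ = 2 ^ (-(2 * ξ)) * G * S ^ Fintype.card {j // j ≠ i} := by
        rw [ENNReal.tsum_mul_left, ENNReal.tsum_pi_pow_sum]
    _ ≤ 2 ^ (-(2 * ξ)) * G * S ^ Fintype.card ι := by
        gcongr
        · exact (pow_zero _).symm.trans_le (ENNReal.le_tsum 0)
        · exact Fintype.card_subtype_le _

theorem energyTailTerm_sup_le_sum (hξ : 0 ≤ ξ) (k : ι → ℕ) :
    energyTailTerm α δ ε ξ (∑ j, k j) (univ.sup k)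
      ≤ ∑ i, energyTailTerm α δ ε ξ (∑ j, k j) (k i) := by
  rcases isEmpty_or_nonempty ι with hι | hι
  · simp [energyTailTerm, hξ]
  · obtain ⟨i, -, hi⟩ := exists_mem_eq_sup univ univ_nonempty k
    rw [hi]
    exact single_le_sum (f := fun i => energyTailTerm α δ ε ξ (∑ j, k j) (k i))
      (fun _ _ => zero_le) (mem_univ i)

theorem tsum_energyTailTerm_le (hδα : δ < α) (hξ : 0 ≤ ξ) :
    ∑' k : ι → ℕ, energyTailTerm α δ ε ξ (∑ j, k j) (univ.sup k)
      ≤ Fintype.card ι * (∑' j : ℕ, ((2 : ℝ≥0∞) ^ (-(2 * (α - δ)))) ^ j)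
        * (∑' m : ℕ, ((2 : ℝ≥0∞) ^ (-(2 * ε))) ^ m) ^ Fintype.card ι * 2 ^ (-(2 * ξ)) := by
  classical
  calc ∑' k : ι → ℕ, energyTailTerm α δ ε ξ (∑ j, k j) (univ.sup k)
      ≤ ∑' k : ι → ℕ, ∑ i, energyTailTerm α δ ε ξ (∑ j, k j) (k i) :=
        ENNReal.tsum_le_tsum (energyTailTerm_sup_le_sum hξ)
    _ = ∑ i, ∑' k : ι → ℕ, energyTailTerm α δ ε ξ (∑ j, k j) (k i) :=
        Summable.tsum_finsetSum fun _ _ => ENNReal.summable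
    _ ≤ _ := by
        refine (sum_le_sum fun i _ => tsum_energyTailTerm_coord_le hδα i).trans_eq ?_
        rw [sum_const, card_univ, nsmul_eq_mul]
        ring

end energyTailTerm

theorem stmt5_general (d : ℕ) (α γ β ε : ℝ)
    (hε1 : 0 < ε) (hε3 : γ - β < α) :
    ∃ C > (0:ℝ), ∀ ξ : ℝ, 0 < ξ →
      (∑' k : Fin d → ℕ,
        if ξ < (α - ε) * (∑ i, (k i : ℝ)) - (γ - β - ε) * ((Finset.univ.sup k : ℕ) : ℝ)
        then (2:ℝ) ^ (-(2*α) * (∑ i, (k i : ℝ))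
              + 2 * (γ - β) * ((Finset.univ.sup k : ℕ) : ℝ))
        else 0)
        ≤ C * (2:ℝ) ^ (-(2 * ξ)) := by
  set K : ℝ≥0∞ := d * (∑' j : ℕ, ((2 : ℝ≥0∞) ^ (-(2 * (α - (γ - β))))) ^ j)
    * (∑' m : ℕ, ((2 : ℝ≥0∞) ^ (-(2 * ε))) ^ m) ^ d
  have hK : K ≠ ∞ := by
    have := ENNReal.tsum_two_rpow_geometric_lt_top (sub_pos.mpr hε3)
    have := ENNReal.tsum_two_rpow_geometric_lt_top hε1
    finiteness
  refine ⟨K.toReal + 1, by positivity, fun ξ hξ => ?_⟩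
  have hbound := tsum_energyTailTerm_le (ι := Fin d) (ε := ε) hε3 hξ.le
  rw [Fintype.card_fin] at hbound
  calc _ ≤ (K * 2 ^ (-(2 * ξ))).toReal := by
        refine ENNReal.tsum_le_toReal_of_tsum_ofReal_le (fun k => by split_ifs <;> positivity)
          (by finiteness) (le_of_eq_of_le (tsum_congr fun k => ?_) hbound)
        simp_rw [← Nat.cast_sum, ofReal_ite_eq_energyTailTerm]
    _ = K.toReal * 2 ^ (-(2 * ξ)) := by simp [ENNReal.toReal_mul, ← ENNReal.toReal_rpow]
    _ ≤ (K.toReal + 1) * 2 ^ (-(2 * ξ)) := by gcongr; linarith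

/-- tail sum outside the energy-norm based index set
`Δ_ε(ξ) = {k : (α-ε)|k|₁ - (γ-β-ε)|k|_∞ ≤ ξ}` decays like `2^{-2ξ}`. -/
theorem stmt5 (d : ℕ) (α γ β ε : ℝ) (hα : 0 < α) (hγ : 0 ≤ γ) (hβγ : β < γ)
    (hε1 : 0 < ε) (hε2 : ε < γ - β) (hε3 : γ - β < α) :
    ∃ C > (0:ℝ), ∀ ξ : ℝ, 0 < ξ →
      (∑' k : Fin d → ℕ,
        if ξ < (α - ε) * (∑ i, (k i : ℝ)) - (γ - β - ε) * ((Finset.univ.sup k : ℕ) : ℝ)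
        then (2:ℝ) ^ (-(2*α) * (∑ i, (k i : ℝ))
              + 2 * (γ - β) * ((Finset.univ.sup k : ℕ) : ℝ))
        else 0)
        ≤ C * (2:ℝ) ^ (-(2 * ξ)) :=
  stmt5_general d α γ β ε hε1 hε3
end

section
/- Let α ≥ 0 and β ∈ ℝ with α + β ≥ 0, and min(α+β, α+β/d) > 1/2. Then the hybrid Sobolev space H^{α,β}(𝕋^d) embeds continuously into C(𝕋^d); more precisely, for every f ∈ H^{α,β}(𝕋^d) the Littlewood–Paley series Σ_{k∈ℕ₀^d} δ_k(f) converges absolutely in the uniform norm and Σ_{k∈ℕ₀^d} ‖δ_k(f)‖_∞ ≤ C ‖f‖_{H^{α,β}} for a constant C = C(α,β,d). -/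
open Finset
open scoped Classical

/-- membership of an integer frequency `n` in the dyadic block `P_j`:
`P_0 = {0}`, `P_j = {n : 2^{j-1} ≤ |n| < 2^j}` for `j ≥ 1`. -/
def blockMem (j : ℕ) (n : ℤ) : Prop :=
  if j = 0 then n = 0 else (2:ℤ) ^ (j - 1) ≤ |n| ∧ |n| < 2 ^ j

/-- `‖δ_k(f)‖₂²` computed via Parseval from the Fourier coefficients `c`. -/
noncomputable def blockNormSq {d : ℕ} (c : (Fin d → ℤ) → ℂ) (k : Fin d → ℕ) : ℝ :=
  ∑' m : Fin d → ℤ, if (∀ i, blockMem (k i) (m i)) then ‖c m‖ ^ 2 else 0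

/-- the Littlewood–Paley piece `δ_k(f)` as a trigonometric polynomial, from the
Fourier coefficients `c` of `f`. -/
noncomputable def deltaFun {d : ℕ} (c : (Fin d → ℤ) → ℂ) (k : Fin d → ℕ)
    (x : Fin d → ℝ) : ℂ :=
  ∑' m : Fin d → ℤ,
    if (∀ i, blockMem (k i) (m i))
    then c m * Complex.exp (Complex.I * ∑ i, (m i : ℂ) * (x i : ℂ)) else 0

/-! Nikol'skij's inequality bounds `‖δ_k f‖_∞` by `2^{(|k|₁+d)/2} ‖δ_k f‖₂`, since `δ_k f` has
at most `2^{|k|₁+d}` frequencies. Splitting `2^{(|k|₁+d)/2} = 2^{(|k|₁+d)/2 - w(k)} · 2^{w(k)}` with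
`w(k) = α|k|₁ + β|k|_∞` and applying Cauchy–Schwarz over `k` gives the bound with
`C² = ∑_k 2^{|k|₁+d-2w(k)}`. This is finite because `w(k) ≥ min(α+β, α+β/d) |k|₁` (using
`|k|_∞ ≤ |k|₁ ≤ d |k|_∞`), so the sum is dominated by a geometric series in `|k|₁` of ratio
`2^{1-2 min(α+β, α+β/d)} < 1`. -/

lemma blockMem.abs_lt {j : ℕ} {n : ℤ} (h : blockMem j n) : |n| < 2 ^ j := by
  unfold blockMem at h
  split_ifs at h
  · simp [h]
  · exact h.2

noncomputable def blockBox {d : ℕ} (k : Fin d → ℕ) : Finset (Fin d → ℤ) :=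
  Fintype.piFinset fun i => Ico (-(2:ℤ) ^ k i) (2 ^ k i)

lemma mem_blockBox_of_blockMem {d : ℕ} {k : Fin d → ℕ} {m : Fin d → ℤ}
    (hm : ∀ i, blockMem (k i) (m i)) : m ∈ blockBox k := by
  simp only [blockBox, Fintype.mem_piFinset, mem_Ico]
  intro i
  have := abs_lt.mp (hm i).abs_lt
  exact ⟨this.1.le, this.2⟩

lemma card_blockBox {d : ℕ} (k : Fin d → ℕ) : #(blockBox k) = 2 ^ (∑ i, k i + d) := by
  have hIco (j : ℕ) : #(Ico (-(2:ℤ) ^ j) (2 ^ j)) = 2 ^ (j + 1) := by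
    rw [Int.card_Ico, sub_neg_eq_add, ← two_mul, ← pow_succ']
    exact_mod_cast Int.toNat_natCast _
  simp [blockBox, Fintype.card_piFinset, hIco, prod_pow_eq_pow_sum, sum_add_distrib]

lemma blockNormSq_nonneg {d : ℕ} (c : (Fin d → ℤ) → ℂ) (k : Fin d → ℕ) : 0 ≤ blockNormSq c k :=
  tsum_nonneg fun _ => by positivity

lemma ite_eq_zero_of_notMem_blockBox {d : ℕ} {k : Fin d → ℕ} {m : Fin d → ℤ} {M : Type*}
    [Zero M] {a : M} (hm : m ∉ blockBox k) : (if ∀ i, blockMem (k i) (m i) then a else 0) = 0 :=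
  if_neg fun h => hm (mem_blockBox_of_blockMem h)

lemma norm_deltaFun_le {d : ℕ} (c : (Fin d → ℤ) → ℂ) (k : Fin d → ℕ) (x : Fin d → ℝ) :
    ‖deltaFun c k x‖ ≤ Real.sqrt (2 ^ (∑ i, k i + d) * blockNormSq c k) := by
  set g : (Fin d → ℤ) → ℝ := fun m => if ∀ i, blockMem (k i) (m i) then ‖c m‖ else 0
  have hnorm : blockNormSq c k = ∑ m ∈ blockBox k, g m ^ 2 := by
    rw [blockNormSq, tsum_eq_sum fun m hm => ite_eq_zero_of_notMem_blockBox hm]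
    exact sum_congr rfl fun m _ => by split_ifs <;> simp [g, *]
  have hdelta : ‖deltaFun c k x‖ ≤ ∑ m ∈ blockBox k, g m := by
    rw [deltaFun, tsum_eq_sum fun m hm => ite_eq_zero_of_notMem_blockBox hm]
    refine (norm_sum_le _ _).trans (sum_le_sum fun m _ => ?_)
    have hexp : ‖Complex.exp (Complex.I * ∑ i, (m i : ℂ) * (x i : ℂ))‖ = 1 := by
      rw [mul_comm]
      exact_mod_cast Complex.norm_exp_ofReal_mul_I (∑ i, (m i : ℝ) * x i)
    split_ifs <;> simp [g, *]
  refine Real.le_sqrt_of_sq_le ?_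
  calc ‖deltaFun c k x‖ ^ 2 ≤ (∑ m ∈ blockBox k, g m) ^ 2 := by gcongr
    _ ≤ #(blockBox k) * ∑ m ∈ blockBox k, g m ^ 2 := sq_sum_le_card_mul_sum_sq
    _ = 2 ^ (∑ i, k i + d) * blockNormSq c k := by rw [card_blockBox, hnorm]; push_cast; rfl

lemma summable_pow_sum_of_lt_one {ι : Type*} [Fintype ι] {ρ : ℝ} (h0 : 0 ≤ ρ) (h1 : ρ < 1) :
    Summable fun k : ι → ℕ => ρ ^ ∑ i, k i := by
  refine summable_of_sum_le (c := (1 - ρ)⁻¹ ^ Fintype.card ι) (fun k => by positivity)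
    fun s => ?_
  set N := s.sup (fun k => univ.sup k) + 1
  have hs : s ⊆ Fintype.piFinset fun _ => range N := fun k hk => by
    simp only [Fintype.mem_piFinset, mem_range, N, Nat.lt_succ_iff]
    exact fun i => (le_sup (f := k) (mem_univ i)).trans (le_sup (f := fun k => univ.sup k) hk)
  have hgeom : ∑ j ∈ range N, ρ ^ j ≤ (1 - ρ)⁻¹ := by
    rw [← tsum_geometric_of_lt_one h0 h1]
    exact (summable_geometric_of_lt_one h0 h1).sum_le_tsum _ fun j _ => by positivity
  calc ∑ k ∈ s, ρ ^ ∑ i, k i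
      ≤ ∑ k ∈ Fintype.piFinset (fun _ => range N), ρ ^ ∑ i, k i :=
        sum_le_sum_of_subset_of_nonneg hs fun _ _ _ => by positivity
    _ = ∏ _i : ι, ∑ j ∈ range N, ρ ^ j := by
        rw [prod_univ_sum]; simp only [prod_pow_eq_pow_sum]
    _ ≤ (1 - ρ)⁻¹ ^ Fintype.card ι := by
        rw [← card_univ, ← prod_const]
        exact prod_le_prod (fun _ _ => by positivity) fun _ _ => hgeom

lemma min_mul_sum_le {ι : Type*} [Fintype ι] (α β : ℝ) (k : ι → ℕ) :
    min (α + β) (α + β / Fintype.card ι) * ∑ i, (k i : ℝ)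
      ≤ α * ∑ i, (k i : ℝ) + β * ((univ.sup k : ℕ) : ℝ) := by
  have hsum : (0 : ℝ) ≤ ∑ i, (k i : ℝ) := by positivity
  rcases le_or_gt 0 β with hβ | hβ
  · have hsum_le : ∑ i, (k i : ℝ) ≤ Fintype.card ι * ((univ.sup k : ℕ) : ℝ) := by
      exact_mod_cast (sum_le_card_nsmul univ k _ fun i _ => le_sup (mem_univ i)).trans_eq
        (by simp)
    have hβsup : β / Fintype.card ι * ∑ i, (k i : ℝ) ≤ β * ((univ.sup k : ℕ) : ℝ) := by
      rcases eq_or_ne (Fintype.card ι : ℝ) 0 with hc | hc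
      · simp only [hc, div_zero, zero_mul]; positivity
      · calc β / Fintype.card ι * ∑ i, (k i : ℝ)
            ≤ β / Fintype.card ι * (Fintype.card ι * ((univ.sup k : ℕ) : ℝ)) := by gcongr
          _ = β * ((univ.sup k : ℕ) : ℝ) := by field_simp
    nlinarith [min_le_right (α + β) (α + β / Fintype.card ι)]
  · have hsup_le : ((univ.sup k : ℕ) : ℝ) ≤ ∑ i, (k i : ℝ) := by
      exact_mod_cast Finset.sup_le fun i _ =>
        single_le_sum (fun j _ => Nat.zero_le (k j)) (mem_univ i)
    nlinarith [min_le_left (α + β) (α + β / Fintype.card ι)]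

lemma summable_mul_and_tsum_mul_le_sqrt {ι : Type*} {a b : ι → ℝ} (ha : ∀ k, 0 ≤ a k)
    (hb : ∀ k, 0 ≤ b k) (hsa : Summable fun k => a k ^ 2) (hsb : Summable fun k => b k ^ 2) :
    Summable (fun k => a k * b k) ∧
      ∑' k, a k * b k ≤ Real.sqrt (∑' k, a k ^ 2) * Real.sqrt (∑' k, b k ^ 2) := by
  simpa [Real.sqrt_eq_rpow] using Real.summable_and_inner_le_Lp_mul_Lq_tsum_of_nonneg
    Real.HolderConjugate.two_two ha hb (by simpa using hsa) (by simpa using hsb)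

lemma summable_two_pow_div_two_rpow {ι : Type*} [Fintype ι] {α β : ℝ}
    (hmin : 1 / 2 < min (α + β) (α + β / Fintype.card ι)) :
    Summable fun k : ι → ℕ => (2 : ℝ) ^ (∑ i, k i + Fintype.card ι)
      / (2 : ℝ) ^ (2 * (α * ∑ i, (k i : ℝ) + β * ((univ.sup k : ℕ) : ℝ))) := by
  set μ := min (α + β) (α + β / Fintype.card ι)
  set ρ : ℝ := 2 / 2 ^ (2 * μ)
  have hρ : ρ < 1 := by
    rw [div_lt_one (by positivity)]
    simpa using Real.rpow_lt_rpow_of_exponent_lt one_lt_two (by linarith : (1 : ℝ) < 2 * μ)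
  refine Summable.of_nonneg_of_le (fun k => by positivity) (fun k => ?_)
    ((summable_pow_sum_of_lt_one (by positivity) hρ).mul_left (2 ^ Fintype.card ι))
  have hexp : ((2 : ℝ) ^ (2 * μ)) ^ ∑ i, k i
      ≤ (2 : ℝ) ^ (2 * (α * ∑ i, (k i : ℝ) + β * ((univ.sup k : ℕ) : ℝ))) := by
    rw [← Real.rpow_mul_natCast zero_le_two]
    push_cast
    exact Real.rpow_le_rpow_of_exponent_le one_le_two (by nlinarith [min_mul_sum_le α β k])
  calc (2 : ℝ) ^ (∑ i, k i + Fintype.card ι)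
        / (2 : ℝ) ^ (2 * (α * ∑ i, (k i : ℝ) + β * ((univ.sup k : ℕ) : ℝ)))
      ≤ (2 : ℝ) ^ (∑ i, k i + Fintype.card ι) / ((2 : ℝ) ^ (2 * μ)) ^ ∑ i, k i := by gcongr
    _ = 2 ^ Fintype.card ι * ρ ^ ∑ i, k i := by rw [div_pow, pow_add]; ring

lemma summable_and_tsum_le_sqrt_mul_sqrt {ι : Type*} {u A W N : ι → ℝ} (hu : ∀ k, 0 ≤ u k)
    (hA : ∀ k, 0 ≤ A k) (hW : ∀ k, 0 < W k) (hN : ∀ k, 0 ≤ N k)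
    (huAN : ∀ k, u k ≤ Real.sqrt (A k * N k)) (hsA : Summable fun k => A k / W k)
    (hsN : Summable fun k => W k * N k) :
    Summable u ∧ ∑' k, u k
      ≤ Real.sqrt (∑' k, A k / W k) * Real.sqrt (∑' k, W k * N k) := by
  have hAW k : 0 ≤ A k / W k := div_nonneg (hA k) (hW k).le
  have hWN k : 0 ≤ W k * N k := mul_nonneg (hW k).le (hN k)
  obtain ⟨hs, hle⟩ := summable_mul_and_tsum_mul_le_sqrt
    (fun k => Real.sqrt_nonneg (A k / W k)) (fun k => Real.sqrt_nonneg (W k * N k))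
    (by simpa [Real.sq_sqrt, hAW] using hsA) (by simpa [Real.sq_sqrt, hWN] using hsN)
  have hsplit k : Real.sqrt (A k * N k) = Real.sqrt (A k / W k) * Real.sqrt (W k * N k) := by
    rw [← Real.sqrt_mul (hAW k)]
    congr 1
    field_simp [(hW k).ne']
  simp only [Real.sq_sqrt, hAW, hWN, ← hsplit] at hs hle
  exact ⟨hs.of_nonneg_of_le hu huAN, ((hs.of_nonneg_of_le hu huAN).tsum_mono hs huAN).trans hle⟩

theorem stmt6_general (d : ℕ) (α β : ℝ)
    (hmin : 1/2 < min (α + β) (α + β / d)) :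
    ∃ C > (0:ℝ), ∀ c : (Fin d → ℤ) → ℂ,
      Summable (fun k : Fin d → ℕ =>
        (2:ℝ) ^ (2 * (α * (∑ i, (k i : ℝ)) + β * ((Finset.univ.sup k : ℕ) : ℝ)))
          * blockNormSq c k) →
      Summable (fun k : Fin d → ℕ => ⨆ x : Fin d → ℝ, ‖deltaFun c k x‖) ∧
      (∑' k : Fin d → ℕ, ⨆ x : Fin d → ℝ, ‖deltaFun c k x‖)
        ≤ C * Real.sqrt (∑' k : Fin d → ℕ,
            (2:ℝ) ^ (2 * (α * (∑ i, (k i : ℝ)) + β * ((Finset.univ.sup k : ℕ) : ℝ)))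
              * blockNormSq c k) := by
  have hsA := summable_two_pow_div_two_rpow (ι := Fin d) (by simpa using hmin)
  simp only [Fintype.card_fin] at hsA
  refine ⟨_, Real.sqrt_pos.mpr (hsA.tsum_pos (fun _ => by positivity) 0 (by positivity)),
    fun c hc => ?_⟩
  exact summable_and_tsum_le_sqrt_mul_sqrt (fun k => Real.iSup_nonneg fun _ => norm_nonneg _)
    (fun _ => by positivity) (fun _ => by positivity) (blockNormSq_nonneg c)
    (fun k => ciSup_le (norm_deltaFun_le c k)) hsA hc

/-- `H^{α,β}(𝕋^d) ↪ C(𝕋^d)`: the Littlewood–Paley series converges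
absolutely in the uniform norm with `∑_k ‖δ_k(f)‖_∞ ≤ C ‖f‖_{H^{α,β}}`. -/
theorem stmt6 (d : ℕ) (hd : 0 < d) (α β : ℝ) (hα : 0 ≤ α) (hab : 0 ≤ α + β)
    (hmin : 1/2 < min (α + β) (α + β / d)) :
    ∃ C > (0:ℝ), ∀ c : (Fin d → ℤ) → ℂ,
      Summable (fun k : Fin d → ℕ =>
        (2:ℝ) ^ (2 * (α * (∑ i, (k i : ℝ)) + β * ((Finset.univ.sup k : ℕ) : ℝ)))
          * blockNormSq c k) →
      Summable (fun k : Fin d → ℕ => ⨆ x : Fin d → ℝ, ‖deltaFun c k x‖) ∧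
      (∑' k : Fin d → ℕ, ⨆ x : Fin d → ℝ, ‖deltaFun c k x‖)
        ≤ C * Real.sqrt (∑' k : Fin d → ℕ,
            (2:ℝ) ^ (2 * (α * (∑ i, (k i : ℝ)) + β * ((Finset.univ.sup k : ℕ) : ℝ)))
              * blockNormSq c k) :=
  stmt6_general d α β hmin
end

section
/- Let X be a Banach space, L an (n+1)-dimensional subspace of X, and r > 0. Then for every continuous linear operator A : X → X of rank at most n, there exists f ∈ L with ‖f‖ ≤ r and ‖f − Af‖ ≥ r. Consequently, the linear n-width of the ball B = {f ∈ L : ‖f‖ ≤ r} in X is at least r. -/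
/-!
Since `A` has rank at most `n < dim L`, its restriction to `L` is not injective, so `L ∩ ker A`
contains a vector `f` of norm exactly `r`; for it `f - A f = f`.
-/

universe u

theorem Submodule.inf_ker_ne_bot_of_rank_range_lt {R : Type*} {M N : Type u} [Ring R]
    [AddCommGroup M] [Module R M] [AddCommGroup N] [Module R N] {f : M →ₗ[R] N}
    {L : Submodule R M} (h : Module.rank R (LinearMap.range f) < Module.rank R L) :
    L ⊓ LinearMap.ker f ≠ ⊥ := by
  intro hbot
  have hinj : Function.Injective (f.domRestrict L) := by
    rw [← LinearMap.ker_eq_bot, LinearMap.ker_domRestrict, ← Submodule.disjoint_iff_comap_eq_bot]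
    exact disjoint_iff.mpr hbot
  refine h.not_ge ?_
  calc Module.rank R L = Module.rank R (LinearMap.range (f.domRestrict L)) :=
        (LinearEquiv.ofInjective _ hinj).rank_eq
    _ ≤ Module.rank R (LinearMap.range f) :=
        Submodule.rank_mono (LinearMap.range_comp_le_range _ _)

theorem stmt11_general (X : Type*) [NormedAddCommGroup X] [NormedSpace ℝ X]
    (n : ℕ) (L : Submodule ℝ X) (hL : Module.finrank ℝ L = n + 1)
    (r : ℝ) (hr : 0 < r) :
    ∀ A : X →L[ℝ] X, Module.rank ℝ (LinearMap.range (A : X →ₗ[ℝ] X)) ≤ (n : Cardinal) →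
      ∃ f ∈ L, ‖f‖ ≤ r ∧ r ≤ ‖f - A f‖ := by
  intro A hA
  set K : Submodule ℝ X := L ⊓ LinearMap.ker (A : X →ₗ[ℝ] X)
  have hrank : Module.rank ℝ (LinearMap.range (A : X →ₗ[ℝ] X)) < Module.rank ℝ L :=
    hA.trans_lt (Module.lt_rank_of_lt_finrank (by omega))
  have : Nontrivial K :=
    Submodule.nontrivial_iff_ne_bot.mpr (Submodule.inf_ker_ne_bot_of_rank_range_lt hrank)
  obtain ⟨⟨f, hfL, hfA⟩, hnorm⟩ := exists_norm_eq K hr.le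
  have hAf : A f = 0 := hfA
  refine ⟨f, hfL, hnorm.le, ?_⟩
  rw [hAf, sub_zero]
  exact hnorm.ge

/-- Tikhomirov's lower bound: if `L` is an `(n+1)`-dimensional
subspace of a Banach space `X` and `r > 0`, then for every continuous linear
operator `A : X → X` of rank at most `n` there is `f ∈ L` with `‖f‖ ≤ r` and
`‖f - A f‖ ≥ r`; hence the linear `n`-width of the ball of radius `r` in `L`
is at least `r`. -/
theorem stmt11 (X : Type*) [NormedAddCommGroup X] [NormedSpace ℝ X] [CompleteSpace X]
    (n : ℕ) (L : Submodule ℝ X) (hL : Module.finrank ℝ L = n + 1)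
    (r : ℝ) (hr : 0 < r) :
    ∀ A : X →L[ℝ] X, Module.rank ℝ (LinearMap.range (A : X →ₗ[ℝ] X)) ≤ (n : Cardinal) →
      ∃ f ∈ L, ‖f‖ ≤ r ∧ r ≤ ‖f - A f‖ :=
  stmt11_general X n L hL r hr
end
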